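/- arXiv:2309.12238 — 6 statements merged into one kernel-verified Lean document; each statement's English description precedes it below -/
import Mathlib

section
/- Let x = (x_1,…,x_n) and h = (h_1,…,h_n) be sequences with values in {1,…,J}. For a permutation τ of {1,…,J} set U_τ = (1/n)·#{i : τ(x_i) ≠ h_i}. Let N_j = #{i : x_i = j} and let N_{(1)} ≤ N_{(2)} be the two smallest values among N_1,…,N_J. If a permutation τ' satisfies U_{τ'} ≤ (N_{(1)} + N_{(2)})/(2n), then U_{τ'} = min over all permutations τ of U_τ. -/
set_option maxHeartbeats 1000000

open Finset

/-- If a permutation `τ'` achieves a misclassification proportion at most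
`(N₍₁₎ + N₍₂₎)/(2n)` (where `N₍₁₎ + N₍₂₎` is the sum of the two smallest class
counts, expressed as the minimum of `N j + N k` over pairs `j ≠ k`), then `τ'`
achieves the minimum misclassification proportion over all permutations. -/
theorem min_perm_loss_of_small (n J : ℕ) (hn : 1 ≤ n) (hJ : 2 ≤ J)
    (x h : Fin n → Fin J) (τ' : Equiv.Perm (Fin J))
    (H : (((univ.filter fun i => τ' (x i) ≠ h i).card : ℝ)) / n ≤
      (⨅ p : {p : Fin J × Fin J // p.1 ≠ p.2},
        (((univ.filter fun i => x i = p.1.1).card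
          + (univ.filter fun i => x i = p.1.2).card : ℕ) : ℝ)) / (2 * n)) :
    ∀ τ : Equiv.Perm (Fin J),
      (((univ.filter fun i => τ' (x i) ≠ h i).card : ℝ)) / n ≤
      (((univ.filter fun i => τ (x i) ≠ h i).card : ℝ)) / n := by
  intro τ
  by_cases hττ : τ = τ'
  · subst hττ; exact le_refl _
  have hnpos : (0 : ℝ) < n := by exact_mod_cast hn
  have hex : ∃ j, τ j ≠ τ' j := by
    by_contra hc
    push_neg at hc
    exact hττ (Equiv.ext hc)
  obtain ⟨j, hj⟩ := hex
  set k := τ'.symm (τ j) with hk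
  have h1 : τ' k = τ j := Equiv.apply_symm_apply τ' (τ j)
  have hjk : j ≠ k := by
    intro hEq
    have : τ' j = τ j := by conv_lhs => rw [hEq, h1]
    exact hj this.symm
  have hkne : τ k ≠ τ' k := by
    rw [h1]
    intro hEq
    exact hjk (τ.injective hEq).symm
  set m : ℝ := (⨅ p : {p : Fin J × Fin J // p.1 ≠ p.2},
        (((univ.filter fun i => x i = p.1.1).card
          + (univ.filter fun i => x i = p.1.2).card : ℕ) : ℝ)) with hm
  have hmle : m ≤ (((univ.filter fun i => x i = j).card
      + (univ.filter fun i => x i = k).card : ℕ) : ℝ) := by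
    rw [hm]
    exact ciInf_le (Finite.bddBelow_range _)
      (⟨(j, k), hjk⟩ : {p : Fin J × Fin J // p.1 ≠ p.2})
  have hsub : (univ.filter fun i => x i = j) ∪ (univ.filter fun i => x i = k)
      ⊆ (univ.filter fun i => τ (x i) ≠ τ' (x i)) := by
    intro i hi
    simp only [mem_union, mem_filter, mem_univ, true_and] at hi ⊢
    rcases hi with hi | hi
    · rw [hi]; exact hj
    · rw [hi]; exact hkne
  have hdisj : Disjoint (univ.filter fun i => x i = j) (univ.filter fun i => x i = k) := by
    rw [disjoint_left]
    intro i hi hi'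
    simp only [mem_filter, mem_univ, true_and] at hi hi'
    exact hjk (hi ▸ hi')
  have hcard1 : (univ.filter fun i => x i = j).card
      + (univ.filter fun i => x i = k).card
      ≤ (univ.filter fun i => τ (x i) ≠ τ' (x i)).card := by
    rw [← card_union_of_disjoint hdisj]
    exact card_le_card hsub
  have htri : (univ.filter fun i => τ (x i) ≠ τ' (x i))
      ⊆ (univ.filter fun i => τ (x i) ≠ h i)
      ∪ (univ.filter fun i => τ' (x i) ≠ h i) := by
    intro i hi
    simp only [mem_union, mem_filter, mem_univ, true_and] at hi ⊢
    by_contra hc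
    push_neg at hc
    exact hi (hc.1.trans hc.2.symm)
  have hcard2 : (univ.filter fun i => τ (x i) ≠ τ' (x i)).card
      ≤ (univ.filter fun i => τ (x i) ≠ h i).card
      + (univ.filter fun i => τ' (x i) ≠ h i).card :=
    le_trans (card_le_card htri) (card_union_le _ _)
  have h2a : 2 * ((univ.filter fun i => τ' (x i) ≠ h i).card : ℝ) ≤ m := by
    rw [div_le_div_iff₀ hnpos (by positivity : (0:ℝ) < 2 * n)] at H
    nlinarith
  have hc1 : (((univ.filter fun i => x i = j).card
      + (univ.filter fun i => x i = k).card : ℕ) : ℝ)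
      ≤ ((univ.filter fun i => τ (x i) ≠ τ' (x i)).card : ℝ) := by
    exact_mod_cast hcard1
  have hc2 : ((univ.filter fun i => τ (x i) ≠ τ' (x i)).card : ℝ)
      ≤ ((univ.filter fun i => τ (x i) ≠ h i).card : ℝ)
      + ((univ.filter fun i => τ' (x i) ≠ h i).card : ℝ) := by
    exact_mod_cast hcard2
  have key : ((univ.filter fun i => τ' (x i) ≠ h i).card : ℝ)
      ≤ ((univ.filter fun i => τ (x i) ≠ h i).card : ℝ) := by linarith
  gcongr
end

section
/- Let Z_1,…,Z_n be independent Bernoulli random variables with parameters p_i, where each p_i ∈ {α_i, 1−α_i} for given α_i ∈ [1/2, 1]. Then E[|∑_{i=1}^n Z_i − n/2|], viewed as a function of the choices p_i, is maximized both when p_i = α_i ∧ (1−α_i) for all i and when p_i = α_i ∨ (1−α_i) for all i. -/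
open Finset

/-- Expected absolute deviation from `n/2` of a sum of `n` independent Bernoulli
variables with parameters `p i`, written out explicitly as a sum over outcomes. -/
noncomputable def bernoulliAbsDev (n : ℕ) (p : Fin n → ℝ) : ℝ :=
  ∑ ω : Fin n → Bool,
    (∏ i, if ω i then p i else 1 - p i) *
      |(∑ i, if ω i then (1 : ℝ) else 0) - n / 2|

/-!
For `f` with monotone increments `f (x + 1) - f x`, the expectation `F p = E f(Z₁ + ⋯ + Zₙ)`
is supermodular in `p ∈ [0,1]ⁿ`: it is affine in each coordinate, and its derivative in one
coordinate is the expectation of an increment of `f`, which grows with the other coordinates.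
Apply this to `f x = |x - n/2|` with `q = 1 - p`. Flipping every parameter turns the sum `S`
into `n - S` and leaves `|S - n/2|` unchanged, so `F (1 - p) = F p`; moreover `p ⊔ (1 - p)` and
`p ⊓ (1 - p) = 1 - (p ⊔ (1 - p))` are the all-max and all-min choices. Hence
`2 F p ≤ F (p ⊔ (1 - p)) + F (p ⊓ (1 - p))`, and the two terms on the right are equal.
-/

noncomputable def bernoulliSumExpect (n : ℕ) (p : Fin n → ℝ) (f : ℝ → ℝ) : ℝ :=
  ∑ ω : Fin n → Bool,
    (∏ i, if ω i then p i else 1 - p i) * f (∑ i, if ω i then (1 : ℝ) else 0)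

section bernoulliSumExpect

variable {n : ℕ} {p q : Fin n → ℝ} {f g : ℝ → ℝ}

@[simp]
lemma bernoulliSumExpect_zero (p : Fin 0 → ℝ) (f : ℝ → ℝ) : bernoulliSumExpect 0 p f = f 0 := by
  simp [bernoulliSumExpect]

lemma bernoulliSumExpect_succ (p : Fin (n + 1) → ℝ) (f : ℝ → ℝ) :
    bernoulliSumExpect (n + 1) p f = (1 - p 0) * bernoulliSumExpect n (Fin.tail p) f
      + p 0 * bernoulliSumExpect n (Fin.tail p) (fun x => f (x + 1)) := by
  unfold bernoulliSumExpect
  rw [← (Fin.consEquiv fun _ => Bool).sum_comp, Fintype.sum_prod_type, Fintype.sum_bool,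
    mul_sum, mul_sum, add_comm]
  simp only [Fin.consEquiv_apply, Fin.prod_univ_succ, Fin.sum_univ_succ, Fin.cons_zero,
    Fin.cons_succ, Fin.tail, if_true, Bool.false_eq_true, if_false, add_comm (1 : ℝ), zero_add,
    mul_assoc]

lemma bernoulliSumExpect_sub (p : Fin n → ℝ) (f g : ℝ → ℝ) :
    bernoulliSumExpect n p (f - g) = bernoulliSumExpect n p f - bernoulliSumExpect n p g := by
  simp only [bernoulliSumExpect, Pi.sub_apply, mul_sub, sum_sub_distrib]

lemma bernoulliSumExpect_mono (hp₀ : ∀ i, 0 ≤ p i) (hp₁ : ∀ i, p i ≤ 1) (hfg : f ≤ g) :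
    bernoulliSumExpect n p f ≤ bernoulliSumExpect n p g :=
  sum_le_sum fun ω _ => mul_le_mul_of_nonneg_left (hfg _) <|
    prod_nonneg fun i _ => by split_ifs <;> linarith [hp₀ i, hp₁ i]

lemma bernoulliSumExpect_mono_param (hf : Monotone f) (hq₀ : ∀ i, 0 ≤ q i) (hqp : q ≤ p)
    (hp₁ : ∀ i, p i ≤ 1) :
    bernoulliSumExpect n q f ≤ bernoulliSumExpect n p f := by
  induction n generalizing f with
  | zero => simp
  | succ n ih =>
    rw [bernoulliSumExpect_succ, bernoulliSumExpect_succ]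
    have hp₀ i : 0 ≤ p i := (hq₀ i).trans (hqp i)
    have hG : bernoulliSumExpect n (Fin.tail q) f ≤ bernoulliSumExpect n (Fin.tail p) f :=
      ih hf (fun i => hq₀ _) (fun i => hqp _) (fun i => hp₁ _)
    have hH : bernoulliSumExpect n (Fin.tail q) (fun x => f (x + 1)) ≤
        bernoulliSumExpect n (Fin.tail p) (fun x => f (x + 1)) :=
      ih (fun x y h => hf (by linarith)) (fun i => hq₀ _) (fun i => hqp _) (fun i => hp₁ _)
    have hGH : bernoulliSumExpect n (Fin.tail p) f ≤
        bernoulliSumExpect n (Fin.tail p) (fun x => f (x + 1)) :=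
      bernoulliSumExpect_mono (fun i => hp₀ _) (fun i => hp₁ _) fun x => hf (by linarith)
    linarith [mul_le_mul_of_nonneg_left hG (sub_nonneg.2 ((hqp 0).trans (hp₁ 0))),
      mul_le_mul_of_nonneg_left hH (hq₀ 0), mul_le_mul_of_nonneg_left hGH (sub_nonneg.2 (hqp 0))]

lemma bernoulliSumExpect_add_le_sup_add_inf (hf : Monotone fun x => f (x + 1) - f x)
    (hp₀ : ∀ i, 0 ≤ p i) (hp₁ : ∀ i, p i ≤ 1) (hq₀ : ∀ i, 0 ≤ q i) (hq₁ : ∀ i, q i ≤ 1) :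
    bernoulliSumExpect n p f + bernoulliSumExpect n q f ≤
      bernoulliSumExpect n (p ⊔ q) f + bernoulliSumExpect n (p ⊓ q) f := by
  induction n generalizing f with
  | zero => simp
  | succ n ih =>
    wlog hqp : q 0 ≤ p 0 generalizing p q
    · simpa only [add_comm, sup_comm, inf_comm] using this hq₀ hq₁ hp₀ hp₁ (by linarith)
    set G := fun r => bernoulliSumExpect n r f
    set H := fun r => bernoulliSumExpect n r (fun x => f (x + 1))
    have hG : G (Fin.tail p) + G (Fin.tail q) ≤
        G (Fin.tail p ⊔ Fin.tail q) + G (Fin.tail p ⊓ Fin.tail q) :=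
      ih hf (fun i => hp₀ _) (fun i => hp₁ _) (fun i => hq₀ _) (fun i => hq₁ _)
    have hH : H (Fin.tail p) + H (Fin.tail q) ≤
        H (Fin.tail p ⊔ Fin.tail q) + H (Fin.tail p ⊓ Fin.tail q) :=
      ih (fun x y h => hf (by linarith)) (fun i => hp₀ _) (fun i => hp₁ _) (fun i => hq₀ _)
        (fun i => hq₁ _)
    -- `H - G` is the derivative in `p 0`, an expectation of the monotone increment of `f`.
    have hD : H (Fin.tail p) - G (Fin.tail p) ≤
        H (Fin.tail p ⊔ Fin.tail q) - G (Fin.tail p ⊔ Fin.tail q) := by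
      simp only [H, G, ← bernoulliSumExpect_sub]
      exact bernoulliSumExpect_mono_param hf (fun i => hp₀ _) le_sup_left
        fun i => max_le (hp₁ _) (hq₁ _)
    have hcross : H (Fin.tail p) + G (Fin.tail q) ≤
        H (Fin.tail p ⊔ Fin.tail q) + G (Fin.tail p ⊓ Fin.tail q) := by
      linarith
    rw [bernoulliSumExpect_succ, bernoulliSumExpect_succ, bernoulliSumExpect_succ,
      bernoulliSumExpect_succ, Pi.sup_apply, Pi.inf_apply, sup_eq_left.2 hqp, inf_eq_right.2 hqp]
    change (1 - p 0) * G (Fin.tail p) + p 0 * H (Fin.tail p) +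
        ((1 - q 0) * G (Fin.tail q) + q 0 * H (Fin.tail q)) ≤
      (1 - p 0) * G (Fin.tail p ⊔ Fin.tail q) + p 0 * H (Fin.tail p ⊔ Fin.tail q) +
        ((1 - q 0) * G (Fin.tail p ⊓ Fin.tail q) + q 0 * H (Fin.tail p ⊓ Fin.tail q))
    linarith [mul_le_mul_of_nonneg_left hG (sub_nonneg.2 (hp₁ 0)),
      mul_le_mul_of_nonneg_left hH (hq₀ 0), mul_le_mul_of_nonneg_left hcross (sub_nonneg.2 hqp)]

lemma bernoulliSumExpect_one_sub (p : Fin n → ℝ) (f : ℝ → ℝ) :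
    bernoulliSumExpect n (1 - p) f = bernoulliSumExpect n p (fun x => f (n - x)) := by
  induction n generalizing f with
  | zero => simp
  | succ n ih =>
    have htail : Fin.tail (1 - p) = 1 - Fin.tail p := rfl
    rw [bernoulliSumExpect_succ, bernoulliSumExpect_succ, htail, ih, ih]
    simp only [Pi.sub_apply, Pi.one_apply, Nat.cast_succ, sub_sub_cancel, sub_add_eq_add_sub,
      add_sub_add_right_eq_sub]
    ring

end bernoulliSumExpect

lemma monotone_abs_add_one_sub_sub_abs_sub (c : ℝ) :
    Monotone fun x => |x + 1 - c| - |x - c| := by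
  intro x y hxy
  cases abs_cases (x + 1 - c) <;> cases abs_cases (x - c) <;> cases abs_cases (y + 1 - c) <;>
    cases abs_cases (y - c) <;> linarith

lemma bernoulliAbsDev_eq_bernoulliSumExpect (n : ℕ) (p : Fin n → ℝ) :
    bernoulliAbsDev n p = bernoulliSumExpect n p fun x => |x - n / 2| :=
  rfl

lemma bernoulliAbsDev_one_sub (n : ℕ) (p : Fin n → ℝ) :
    bernoulliAbsDev n (1 - p) = bernoulliAbsDev n p := by
  rw [bernoulliAbsDev_eq_bernoulliSumExpect, bernoulliSumExpect_one_sub,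
    bernoulliAbsDev_eq_bernoulliSumExpect]
  congr with x
  rw [show (n : ℝ) - x - n / 2 = -(x - n / 2) by ring, abs_neg]

lemma bernoulliAbsDev_add_le_sup_add_inf {n : ℕ} {p q : Fin n → ℝ} (hp₀ : ∀ i, 0 ≤ p i)
    (hp₁ : ∀ i, p i ≤ 1) (hq₀ : ∀ i, 0 ≤ q i) (hq₁ : ∀ i, q i ≤ 1) :
    bernoulliAbsDev n p + bernoulliAbsDev n q ≤
      bernoulliAbsDev n (p ⊔ q) + bernoulliAbsDev n (p ⊓ q) :=
  bernoulliSumExpect_add_le_sup_add_inf (f := fun x => |x - n / 2|)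
    (monotone_abs_add_one_sub_sub_abs_sub _) hp₀ hp₁ hq₀ hq₁

/-- Among all choices `p i ∈ {α i, 1 - α i}` for the parameters of `n` independent
Bernoulli variables `Z i`, the expectation `E|∑ Z i - n/2|` is maximized both when
`p i = α i ⊓ (1 - α i)` for all `i` and when `p i = α i ⊔ (1 - α i)` for all `i`. -/
theorem bernoulliAbsDev_max (n : ℕ) (α : Fin n → ℝ)
    (hα : ∀ i, α i ∈ Set.Icc (1 / 2 : ℝ) 1)
    (p : Fin n → ℝ) (hp : ∀ i, p i = α i ∨ p i = 1 - α i) :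
    bernoulliAbsDev n p ≤ bernoulliAbsDev n (fun i => min (α i) (1 - α i)) ∧
    bernoulliAbsDev n p ≤ bernoulliAbsDev n (fun i => max (α i) (1 - α i)) := by
  have hp₀ i : 0 ≤ p i := by rcases hp i with h | h <;> linarith [(hα i).1, (hα i).2]
  have hp₁ i : p i ≤ 1 := by rcases hp i with h | h <;> linarith [(hα i).1, (hα i).2]
  have hsup : p ⊔ (1 - p) = fun i => max (α i) (1 - α i) := by
    ext i; rcases hp i with h | h <;> simp [h, max_comm]
  have hinf : p ⊓ (1 - p) = fun i => min (α i) (1 - α i) := by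
    ext i; rcases hp i with h | h <;> simp [h, min_comm]
  have hinf_eq : p ⊓ (1 - p) = 1 - (p ⊔ (1 - p)) := by
    ext i
    simp only [Pi.inf_apply, Pi.sup_apply, Pi.sub_apply, Pi.one_apply]
    rw [← min_sub_sub_left, sub_sub_cancel, min_comm]
  have key := bernoulliAbsDev_add_le_sup_add_inf (q := 1 - p) hp₀ hp₁
    (fun i => sub_nonneg.2 (hp₁ i)) (fun i => sub_le_self 1 (hp₀ i))
  rw [bernoulliAbsDev_one_sub, hinf_eq, bernoulliAbsDev_one_sub] at key
  rw [← hsup, ← hinf, hinf_eq, bernoulliAbsDev_one_sub]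
  exact ⟨by linarith, by linarith⟩
end

section
/- For any n-classifier h: 𝕐^n → {1,…,J}^n and any probability model (X_{1:n}, Y_{1:n}), the clustering risk of the induced clusterer satisfies: the infimum over classifiers of E[min_{τ ∈ S_J} E[(1/n)∑_{i=1}^n 1[τ(X_i) ≠ h_i(Y_{1:n})] | Y_{1:n}]] equals the infimum over classifiers of E[(1/n)∑_{i=1}^n 1[X_i ≠ h_i(Y_{1:n})]] (the Bayes risk of classification). -/
/-!
Relabelling the true classes by `τ` turns the loss of `h` into the loss of the classifier
`τ⁻¹ ∘ h`; with `τ = 1` this bounds the clustering risk of `h` by its classification risk.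
Conversely, the conditional risks given `Y` are functions of `Y`, so a minimising permutation can
be chosen as a measurable function `τ̂` of `Y`. Since `τ̂(Y)` is `σ(Y)`-measurable and takes
finitely many values, the conditional expectation may be integrated fibre by fibre: the
clustering risk of `h` is the classification risk of the classifier `y ↦ τ̂(y)⁻¹ ∘ h(y)`.
So every clustering risk is a classification risk and each classification risk dominates a
clustering risk, which forces the two infima to agree.
-/

open MeasureTheory ProbabilityTheory Finset

theorem ciInf_eq_ciInf_of_forall_exists_le {α ι κ : Type*} [ConditionallyCompleteLinearOrder α]
    {f : ι → α} {g : κ → α} (hf : ∀ i, ∃ j, g j ≤ f i) (hg : ∀ j, ∃ i, f i ≤ g j) :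
    ⨅ i, f i = ⨅ j, g j :=
  csInf_eq_csInf_of_forall_exists_le (by rintro _ ⟨i, rfl⟩; simpa using hf i)
    (by rintro _ ⟨j, rfl⟩; simpa using hg j)

theorem ciInf_eq_of_forall_le {α ι : Type*} [ConditionallyCompleteLattice α] {f : ι → α} {i₀ : ι}
    (h : ∀ i, f i₀ ≤ f i) : ⨅ i, f i = f i₀ :=
  IsLeast.csInf_eq ⟨⟨i₀, rfl⟩, Set.forall_mem_range.2 h⟩

section Selection

variable {ι β γ : Type*} [mβ : MeasurableSpace β]

theorem exists_measurable_argmin [Finite ι] [Nonempty ι] {f : ι → β → ℝ}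
    (hf : ∀ i, Measurable (f i)) :
    ∃ σ : β → ι, (∀ i, MeasurableSet (σ ⁻¹' {i})) ∧ ∀ y i, f (σ y) y ≤ f i y := by
  classical
  -- the first minimiser along an enumeration `ℕ → ι`; `Nat.find` keeps the choice measurable
  obtain ⟨e, he⟩ := exists_surjective_nat ι
  have hmin : ∀ y, ∃ k, ∀ i, f (e k) y ≤ f i y := fun y => by
    obtain ⟨i₀, hi₀⟩ := Finite.exists_min (f · y)
    obtain ⟨k, rfl⟩ := he i₀
    exact ⟨k, hi₀⟩
  have hfind : Measurable fun y => Nat.find (hmin y) :=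
    measurable_find hmin fun k => by
      simpa only [Set.ofPred_forall] using
        MeasurableSet.iInter fun i => measurableSet_le (hf _) (hf i)
  exact ⟨fun y => e (Nat.find (hmin y)), fun i => hfind (.of_discrete (s := e ⁻¹' {i})),
    fun y => Nat.find_spec (hmin y)⟩

theorem measurable_select [Countable ι] [MeasurableSpace γ] {σ : β → ι}
    (hσ : ∀ i, MeasurableSet (σ ⁻¹' {i})) {F : ι → β → γ} (hF : ∀ i, Measurable (F i)) :
    Measurable fun y => F (σ y) y := by
  intro B hB
  have : (fun y => F (σ y) y) ⁻¹' B = ⋃ i, σ ⁻¹' {i} ∩ F i ⁻¹' B := by ext y; simp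
  rw [this]
  exact .iUnion fun i => (hσ i).inter (hF i hB)

end Selection

section SelectIntegral

variable {ι Ω : Type*} [Fintype ι] {m m₀ : MeasurableSpace Ω} {μ : Measure Ω}
  {σ : Ω → ι} {G : ι → Ω → ℝ}

theorem select_eq_sum_indicator (σ : Ω → ι) (G : ι → Ω → ℝ) (ω : Ω) :
    G (σ ω) ω = ∑ i, (σ ⁻¹' {i}).indicator (G i) ω := by
  classical
  rw [Finset.sum_eq_single_of_mem (σ ω) (mem_univ _) fun i _ hi =>
    Set.indicator_of_notMem (fun h : ω ∈ σ ⁻¹' {i} => hi h.symm) (G i)]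
  exact (Set.indicator_of_mem (Set.mem_preimage.2 rfl) (G (σ ω))).symm

theorem integrable_select (hσ : ∀ i, MeasurableSet (σ ⁻¹' {i}))
    (hG : ∀ i, Integrable (G i) μ) : Integrable (fun ω => G (σ ω) ω) μ := by
  simp_rw [select_eq_sum_indicator σ G]
  exact integrable_finsetSum _ fun i _ => (hG i).indicator (hσ i)

theorem integral_select (hσ : ∀ i, MeasurableSet (σ ⁻¹' {i}))
    (hG : ∀ i, Integrable (G i) μ) :
    ∫ ω, G (σ ω) ω ∂μ = ∑ i, ∫ ω in σ ⁻¹' {i}, G i ω ∂μ := by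
  simp_rw [select_eq_sum_indicator σ G]
  rw [integral_finsetSum _ fun i _ => (hG i).indicator (hσ i)]
  exact Finset.sum_congr rfl fun i _ => integral_indicator (hσ i)

theorem integral_condExp_select (hm : m ≤ m₀) [SigmaFinite (μ.trim hm)]
    (hσ : ∀ i, MeasurableSet[m] (σ ⁻¹' {i})) (hG : ∀ i, Integrable (G i) μ) :
    ∫ ω, (μ[G (σ ω) | m]) ω ∂μ = ∫ ω, G (σ ω) ω ∂μ := by
  have hσ₀ : ∀ i, MeasurableSet[m₀] (σ ⁻¹' {i}) := fun i => hm _ (hσ i)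
  rw [integral_select (G := fun i => μ[G i | m]) hσ₀ fun i => integrable_condExp,
    integral_select hσ₀ hG]
  exact Finset.sum_congr rfl fun i _ => setIntegral_condExp hm (hG i) (hσ i)

end SelectIntegral

section CondExpMin

variable {ι Ω : Type*} [Fintype ι] [Nonempty ι] {m m₀ : MeasurableSpace Ω} {μ : Measure Ω}
  {G : ι → Ω → ℝ}

theorem integral_iInf_condExp_le (hm : m ≤ m₀) [SigmaFinite (μ.trim hm)] (i : ι) :
    ∫ ω, ⨅ j, (μ[G j | m]) ω ∂μ ≤ ∫ ω, G i ω ∂μ := by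
  obtain ⟨σ, hσ, hmin⟩ := exists_measurable_argmin (mβ := m)
    fun j => (stronglyMeasurable_condExp (f := G j) (μ := μ)).measurable
  calc ∫ ω, ⨅ j, (μ[G j | m]) ω ∂μ = ∫ ω, (μ[G (σ ω) | m]) ω ∂μ :=
        integral_congr_ae (ae_of_all _ fun ω => ciInf_eq_of_forall_le (hmin ω))
    _ ≤ ∫ ω, (μ[G i | m]) ω ∂μ :=
        integral_mono
          (integrable_select (G := fun j => μ[G j | m]) (fun j => hm _ (hσ j))
            fun _ => integrable_condExp)
          integrable_condExp fun ω => hmin ω i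
    _ = ∫ ω, G i ω ∂μ := integral_condExp hm

theorem exists_integral_iInf_condExp_comap_eq {𝕐 : Type*} [m𝕐 : MeasurableSpace 𝕐] {Y : Ω → 𝕐}
    (hY : Measurable[m₀] Y) [SigmaFinite (μ.trim hY.comap_le)] (hG : ∀ i, Integrable (G i) μ) :
    ∃ σ : 𝕐 → ι, (∀ i, MeasurableSet (σ ⁻¹' {i})) ∧
      ∫ ω, ⨅ i, (μ[G i | m𝕐.comap Y]) ω ∂μ = ∫ ω, G (σ (Y ω)) ω ∂μ := by
  have hfactor : ∀ i, ∃ φ : 𝕐 → ℝ, StronglyMeasurable φ ∧ μ[G i | m𝕐.comap Y] = φ ∘ Y :=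
    fun i => stronglyMeasurable_condExp.exists_eq_measurable_comp
  choose φ hφ hφY using hfactor
  obtain ⟨σ, hσ, hmin⟩ := exists_measurable_argmin fun i => (hφ i).measurable
  refine ⟨σ, hσ, ?_⟩
  calc ∫ ω, ⨅ i, (μ[G i | m𝕐.comap Y]) ω ∂μ = ∫ ω, (μ[G (σ (Y ω)) | m𝕐.comap Y]) ω ∂μ :=
        integral_congr_ae <| ae_of_all _ fun ω => ciInf_eq_of_forall_le fun i => by
          simpa only [hφY, Function.comp_apply] using hmin (Y ω) i
    _ = ∫ ω, G (σ (Y ω)) ω ∂μ :=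
        integral_condExp_select hY.comap_le (fun i => ⟨_, hσ i, rfl⟩) hG

end CondExpMin

section Misclassification

variable {Ω α : Type*} {n : ℕ}

noncomputable def misclassificationRate [DecidableEq α] (X : Fin n → Ω → α)
    (c : Ω → Fin n → α) (ω : Ω) : ℝ :=
  (1 / n : ℝ) * ∑ i, if X i ω ≠ c ω i then 1 else 0

theorem misclassificationRate_perm_symm [DecidableEq α] (X : Fin n → Ω → α) (c : Ω → Fin n → α)
    (τ : Equiv.Perm α) :
    (fun ω => (1 / n : ℝ) * ∑ i, if τ (X i ω) ≠ c ω i then 1 else 0)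
      = misclassificationRate X fun ω i => τ.symm (c ω i) := by
  funext ω
  simp only [misclassificationRate, ne_eq, ← Equiv.eq_symm_apply]

variable [MeasurableSpace Ω] [MeasurableSpace α]

theorem integrable_misclassificationRate [DecidableEq α] [MeasurableEq α] {μ : Measure Ω}
    [IsFiniteMeasure μ] {X : Fin n → Ω → α} (hX : ∀ i, Measurable (X i)) {c : Ω → Fin n → α}
    (hc : Measurable c) :
    Integrable (misclassificationRate X c) μ := by
  refine (integrable_finsetSum _ fun i _ => ?_).const_mul _
  refine Integrable.of_bound (C := 1) ?_ (ae_of_all _ fun ω => by split_ifs <;> simp)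
  have hdiff : MeasurableSet {ω | X i ω ≠ c ω i} :=
    (measurableSet_eq_fun (hX i) ((measurable_pi_apply i).comp hc)).compl
  exact (Measurable.ite hdiff measurable_const measurable_const).aestronglyMeasurable

theorem Measurable.perm_symm_apply [DiscreteMeasurableSpace α] {𝕐 : Type*} [MeasurableSpace 𝕐]
    {h : 𝕐 → Fin n → α} (hh : Measurable h) (τ : Equiv.Perm α) :
    Measurable fun y i => τ.symm (h y i) := by
  fun_prop

end Misclassification

theorem inf_clustering_risk_eq_inf_class_risk_general
    {Ω 𝕐 : Type*} [MeasurableSpace Ω] [MeasurableSpace 𝕐]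
    (μ : Measure Ω) [IsProbabilityMeasure μ]
    (n J : ℕ)
    (X : Fin n → Ω → Fin J) (hX : ∀ i, Measurable (X i))
    (Y : Ω → 𝕐) (hY : Measurable Y) :
    (⨅ h : {h : 𝕐 → Fin n → Fin J // Measurable h},
      ∫ ω, ⨅ τ : Equiv.Perm (Fin J),
        (μ[fun ω' => (1 / n : ℝ) * ∑ i, if τ (X i ω') ≠ h.1 (Y ω') i then 1 else 0
          | MeasurableSpace.comap Y inferInstance]) ω ∂μ)
    = ⨅ h : {h : 𝕐 → Fin n → Fin J // Measurable h},
        ∫ ω, (1 / n : ℝ) * ∑ i, if X i ω ≠ h.1 (Y ω) i then 1 else 0 ∂μ := by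
  simp_rw [misclassificationRate_perm_symm X]
  have hG (h : {h : 𝕐 → Fin n → Fin J // Measurable h}) (τ : Equiv.Perm (Fin J)) :
      Integrable (misclassificationRate X fun ω i => τ.symm (h.1 (Y ω) i)) μ :=
    integrable_misclassificationRate hX ((h.2.perm_symm_apply τ).comp hY)
  refine ciInf_eq_ciInf_of_forall_exists_le (fun h => ?_) fun h =>
    ⟨h, integral_iInf_condExp_le hY.comap_le 1⟩
  obtain ⟨σ, hσ, hrisk⟩ := exists_integral_iInf_condExp_comap_eq hY (hG h)
  exact ⟨⟨fun y i => (σ y).symm (h.1 y i), measurable_select hσ (h.2.perm_symm_apply ·)⟩,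
    hrisk.ge⟩

/-- The infimum over (measurable) classifiers of the expected conditional minimum
over label permutations of the misclassification proportion equals the infimum over
classifiers of the plain expected misclassification proportion (the Bayes risk of
classification). -/
theorem inf_clustering_risk_eq_inf_class_risk
    {Ω 𝕐 : Type*} [MeasurableSpace Ω] [MeasurableSpace 𝕐]
    (μ : Measure Ω) [IsProbabilityMeasure μ]
    (n J : ℕ) (hn : 1 ≤ n) (hJ : 1 ≤ J)
    (X : Fin n → Ω → Fin J) (hX : ∀ i, Measurable (X i))
    (Y : Ω → 𝕐) (hY : Measurable Y) :
    (⨅ h : {h : 𝕐 → Fin n → Fin J // Measurable h},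
      ∫ ω, ⨅ τ : Equiv.Perm (Fin J),
        (μ[fun ω' => (1 / n : ℝ) * ∑ i, if τ (X i ω') ≠ h.1 (Y ω') i then 1 else 0
          | MeasurableSpace.comap Y inferInstance]) ω ∂μ)
    = ⨅ h : {h : 𝕐 → Fin n → Fin J // Measurable h},
        ∫ ω, (1 / n : ℝ) * ∑ i, if X i ω ≠ h.1 (Y ω) i then 1 else 0 ∂μ :=
  inf_clustering_risk_eq_inf_class_risk_general μ n J X hX Y hY
end

section
/- Let S_n be a Binomial(n, r) random variable with r = 1/2 − ε, ε ∈ [0, 1/2). Then for all x ∈ [0,1], P(S_n > (n/2)(x+1)) ≤ exp(−n·g(x)) where g(t) = ((1+t)/2)log((1+t)/(1−2ε)) + ((1−t)/2)log((1−t)/(1+2ε)). Consequently, ∫_0^1 P(S_n > (n/2)(x+1)) dx ≤ min( e^{−n g(0)}/(n g'(0)), √(π/(2n)) ). -/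
/-!
Exponential tilting: `1{k > a} ≤ e^{l (k - a)}` bounds the tail of `Binomial(n, r)` by
`e^{-l a} (r e^l + 1 - r)^n`, and the optimal `l` turns this into `exp (-n D(q ‖ r))` for
`a = n q`, where `D` is the Kullback–Leibler divergence of Bernoulli laws; for `q = (1 + x) / 2`
and `r = 1/2 - ε` this is `exp (-n g x)`.
Writing `D(q ‖ r) = D(q ‖ 1/2) + D(1/2 ‖ r) + (q - 1/2) log ((1 - r) / r)` and using
`D(q ‖ 1/2) = log 2 - H(q) ≥ 2 (q - 1/2)^2` gives `g x ≥ g 0 + g' 0 * x + x^2 / 2`.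
Bounding `e^{-n g}` by the Gaussian `e^{-n x^2 / 2}`, resp. by `e^{-n (g 0 + g' 0 * x)}`, and
integrating over `(0, ∞)` gives the two bounds on the integral.
-/

open Real Set Finset MeasureTheory

noncomputable def binomialTail (n : ℕ) (r a : ℝ) : ℝ :=
  ∑ k ∈ range (n + 1), if a < k then (n.choose k : ℝ) * r ^ k * (1 - r) ^ (n - k) else 0

section BinomialTail

variable {n : ℕ} {r : ℝ}

lemma binomialTail_antitone (hr₀ : 0 ≤ r) (hr₁ : r ≤ 1) : Antitone (binomialTail n r) := by
  intro a b hab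
  refine sum_le_sum fun k _ => ?_
  have := sub_nonneg.2 hr₁
  by_cases hb : b < k
  · rw [if_pos hb, if_pos (hab.trans_lt hb)]
  · rw [if_neg hb]
    split_ifs <;> positivity

lemma binomialTail_eq_zero_of_le {a : ℝ} (ha : n ≤ a) : binomialTail n r a = 0 :=
  sum_eq_zero fun k hk => if_neg <| not_lt.2 <|
    le_trans (by exact_mod_cast Nat.lt_succ_iff.1 (mem_range.1 hk)) ha

lemma binomialTail_le_exp_mul_pow (hr₀ : 0 ≤ r) (hr₁ : r ≤ 1) {l : ℝ} (hl : 0 ≤ l) (a : ℝ) :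
    binomialTail n r a ≤ exp (-l * a) * (r * exp l + (1 - r)) ^ n := by
  have := sub_nonneg.2 hr₁
  calc binomialTail n r a
      ≤ ∑ k ∈ range (n + 1),
          exp (l * (k - a)) * ((n.choose k : ℝ) * r ^ k * (1 - r) ^ (n - k)) := by
        refine sum_le_sum fun k _ => ?_
        split_ifs with hk
        · exact le_mul_of_one_le_left (by positivity)
            (one_le_exp (mul_nonneg hl (sub_nonneg.2 hk.le)))
        · positivity
    _ = exp (-l * a) * (r * exp l + (1 - r)) ^ n := by
        rw [add_pow, mul_sum]
        refine sum_congr rfl fun k _ => ?_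
        have : exp (l * (k - a)) = exp (-l * a) * exp (k * l) := by rw [← exp_add]; ring_nf
        rw [this, mul_pow, ← exp_nat_mul]
        ring

end BinomialTail

noncomputable def bernoulliKL (q r : ℝ) : ℝ :=
  q * log (q / r) + (1 - q) * log ((1 - q) / (1 - r))

theorem binomialTail_le_exp_neg_bernoulliKL {n : ℕ} {q r : ℝ} (hr : 0 < r) (hrq : r ≤ q)
    (hq : q ≤ 1) : binomialTail n r (n * q) ≤ exp (-n * bernoulliKL q r) := by
  rcases hq.eq_or_lt with rfl | hq
  · rw [binomialTail_eq_zero_of_le (by simp)]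
    positivity
  have hr₁ : 0 < 1 - r := by linarith
  have hq₁ : 0 < 1 - q := by linarith
  have hq₀ : 0 < q := by linarith
  -- the tilt that minimises `exp (-l * n * q) * (r * exp l + 1 - r) ^ n`
  set l := log (q * (1 - r) / (r * (1 - q)))
  have hl : 0 ≤ l := log_nonneg <| by rw [le_div_iff₀ (by positivity)]; nlinarith
  have hmgf : r * exp l + (1 - r) = (1 - r) / (1 - q) := by
    rw [exp_log (by positivity)]
    field_simp
    ring
  calc binomialTail n r (n * q) ≤ exp (-l * (n * q)) * ((1 - r) / (1 - q)) ^ n :=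
        hmgf ▸ binomialTail_le_exp_mul_pow hr.le (by linarith) hl _
    _ = exp (-n * bernoulliKL q r) := by
        rw [← exp_log (div_pos hr₁ hq₁), ← exp_nat_mul, ← exp_add, bernoulliKL]
        simp only [l]
        rw [log_div (by positivity) (by positivity), log_mul hq₀.ne' hr₁.ne',
          log_mul hr.ne' hq₁.ne', log_div hq₀.ne' hr.ne', log_div hq₁.ne' hr₁.ne',
          log_div hr₁.ne' hq₁.ne']
        congr 1
        ring

lemma two_mul_le_log_one_add_sub_log_one_sub {x : ℝ} (hx₀ : 0 ≤ x) (hx₁ : x < 1) :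
    2 * x ≤ log (1 + x) - log (1 - x) := by
  have hsum := hasSum_log_sub_log_of_abs_lt_one (abs_lt.2 ⟨by linarith, hx₁⟩)
  simpa using le_hasSum hsum 0 fun k _ => by positivity

lemma binEntropy_le_log_two_sub_two_mul_sq {p : ℝ} (hp₀ : 0 ≤ p) (hp₁ : p ≤ 1) :
    binEntropy p ≤ log 2 - 2 * (p - 2⁻¹) ^ 2 := by
  wlog hp : 2⁻¹ ≤ p generalizing p
  · simpa [binEntropy_one_sub, show (1 - p - 2⁻¹) ^ 2 = (p - 2⁻¹) ^ 2 by ring] using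
      this (p := 1 - p) (by linarith) (by linarith) (by linarith)
  have hanti : AntitoneOn (fun t => binEntropy t + 2 * (t - 2⁻¹) ^ 2) (Icc 2⁻¹ 1) := by
    refine antitoneOn_of_hasDerivWithinAt_nonpos (convex_Icc _ _) (by fun_prop)
      (f' := fun t => log (1 - t) - log t + 4 * (t - 2⁻¹)) (fun t ht => ?_) fun t ht => ?_
    · rw [interior_Icc] at ht
      have h := (hasDerivAt_binEntropy (by linarith [ht.1]) (by linarith [ht.2])).add
        ((((hasDerivAt_id t).sub_const 2⁻¹).pow 2).const_mul 2)
      refine (h.congr_deriv ?_).hasDerivWithinAt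
      simp only [id, Nat.cast_ofNat]
      ring
    · rw [interior_Icc] at ht
      have h := two_mul_le_log_one_add_sub_log_one_sub (x := 2 * t - 1) (by linarith [ht.1])
        (by linarith [ht.2])
      rw [show 1 + (2 * t - 1) = 2 * t by ring, show 1 - (2 * t - 1) = 2 * (1 - t) by ring,
        log_mul two_ne_zero (by linarith [ht.1]), log_mul two_ne_zero (by linarith [ht.2])] at h
      linarith
  have := hanti ⟨le_rfl, by norm_num⟩ ⟨hp, hp₁⟩ hp
  simp only [binEntropy_two_inv, sub_self] at this
  linarith

lemma mul_log_div_of_ne_zero (x : ℝ) {y : ℝ} (hy : y ≠ 0) :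
    x * log (x / y) = x * log x - x * log y := by
  rcases eq_or_ne x 0 with rfl | hx
  · simp
  · rw [log_div hx hy, mul_sub]

lemma bernoulliKL_eq_neg_binEntropy_sub (q : ℝ) {r : ℝ} (hr₀ : r ≠ 0) (hr₁ : r ≠ 1) :
    bernoulliKL q r = -binEntropy q - q * log r - (1 - q) * log (1 - r) := by
  rw [bernoulliKL, binEntropy, mul_log_div_of_ne_zero _ hr₀,
    mul_log_div_of_ne_zero _ (sub_ne_zero.2 hr₁.symm), log_inv, log_inv]
  ring

lemma two_mul_sq_add_le_bernoulliKL {q r : ℝ} (hq₀ : 0 ≤ q) (hq₁ : q ≤ 1) (hr₀ : 0 < r)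
    (hr₁ : r < 1) :
    2 * (q - 2⁻¹) ^ 2 - 2⁻¹ * log (4 * r * (1 - r)) + (q - 2⁻¹) * log ((1 - r) / r)
      ≤ bernoulliKL q r := by
  have hH := binEntropy_le_log_two_sub_two_mul_sq hq₀ hq₁
  rw [bernoulliKL_eq_neg_binEntropy_sub q hr₀.ne' hr₁.ne, log_div (by linarith) hr₀.ne',
    log_mul (by positivity) (by linarith), log_mul (by norm_num) hr₀.ne',
    show (4 : ℝ) = 2 * 2 by norm_num, log_mul two_ne_zero two_ne_zero]
  linarith

lemma bernoulliKL_one_add_div_two (x ε : ℝ) :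
    bernoulliKL ((1 + x) / 2) (1 / 2 - ε) =
      (1 + x) / 2 * log ((1 + x) / (1 - 2 * ε)) + (1 - x) / 2 * log ((1 - x) / (1 + 2 * ε)) := by
  rw [bernoulliKL, show 1 - (1 + x) / 2 = (1 - x) / 2 by ring,
    show 1 - (1 / 2 - ε) = (1 + 2 * ε) / 2 by ring, show 1 / 2 - ε = (1 - 2 * ε) / 2 by ring,
    div_div_div_cancel_right₀ two_ne_zero, div_div_div_cancel_right₀ two_ne_zero]

lemma sq_div_two_add_le_bernoulliKL {x ε : ℝ} (hx₀ : -1 ≤ x) (hx₁ : x ≤ 1) (hε₀ : -(1 / 2) < ε)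
    (hε₁ : ε < 1 / 2) :
    x ^ 2 / 2 + -(1 / 2) * log (1 - 4 * ε ^ 2) + 1 / 2 * log ((1 + 2 * ε) / (1 - 2 * ε)) * x
      ≤ bernoulliKL ((1 + x) / 2) (1 / 2 - ε) := by
  have h := two_mul_sq_add_le_bernoulliKL (q := (1 + x) / 2) (r := 1 / 2 - ε) (by linarith)
    (by linarith) (by linarith) (by linarith)
  rw [show 4 * (1 / 2 - ε) * (1 - (1 / 2 - ε)) = 1 - 4 * ε ^ 2 by ring,
    show (1 - (1 / 2 - ε)) / (1 / 2 - ε) = (1 + 2 * ε) / (1 - 2 * ε) by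
      rw [show 1 - (1 / 2 - ε) = (1 + 2 * ε) / 2 by ring,
        show 1 / 2 - ε = (1 - 2 * ε) / 2 by ring, div_div_div_cancel_right₀ two_ne_zero]] at h
  linarith

lemma intervalIntegral_le_setIntegral_Ioi {f φ : ℝ → ℝ} {b : ℝ} (hb : 0 ≤ b)
    (hf : IntervalIntegrable f volume 0 b) (hφ : IntegrableOn φ (Set.Ioi 0))
    (hφ₀ : ∀ x ∈ Set.Ioi 0, 0 ≤ φ x) (hfφ : ∀ x ∈ Icc 0 b, f x ≤ φ x) :
    ∫ x in 0..b, f x ≤ ∫ x in Set.Ioi 0, φ x := by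
  calc ∫ x in 0..b, f x ≤ ∫ x in 0..b, φ x :=
        intervalIntegral.integral_mono_on hb hf
          ((intervalIntegrable_iff_integrableOn_Ioc_of_le hb).2
            (hφ.mono_set Ioc_subset_Ioi_self)) hfφ
    _ ≤ ∫ x in Set.Ioi 0, φ x := by
        rw [intervalIntegral.integral_of_le hb]
        exact setIntegral_mono_set hφ ((ae_restrict_mem measurableSet_Ioi).mono hφ₀)
          Ioc_subset_Ioi_self.eventuallyLE

lemma intervalIntegral_le_sqrt_of_le_exp_neg_mul_sq {f : ℝ → ℝ} {b : ℝ} (hb : 0 < b)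
    (hf : IntervalIntegrable f volume 0 1) (hfb : ∀ x ∈ Icc (0 : ℝ) 1, f x ≤ exp (-b * x ^ 2)) :
    ∫ x in 0..1, f x ≤ sqrt (π / b) / 2 :=
  integral_gaussian_Ioi b ▸ intervalIntegral_le_setIntegral_Ioi zero_le_one hf
    (integrable_exp_neg_mul_sq hb).integrableOn (fun _ _ => (exp_pos _).le) hfb

lemma intervalIntegral_le_div_of_le_mul_exp_neg_mul {f : ℝ → ℝ} {A m : ℝ} (hA : 0 ≤ A)
    (hm : 0 < m) (hf : IntervalIntegrable f volume 0 1)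
    (hfm : ∀ x ∈ Icc (0 : ℝ) 1, f x ≤ A * exp (-m * x)) :
    ∫ x in 0..1, f x ≤ A / m := by
  have h := intervalIntegral_le_setIntegral_Ioi zero_le_one hf
    ((integrableOn_exp_mul_Ioi (neg_neg_of_pos hm) 0).const_mul A) (fun _ _ => by positivity) hfm
  rwa [integral_const_mul, integral_exp_mul_Ioi (neg_neg_of_pos hm), mul_zero, exp_zero,
    neg_div_neg_eq, mul_one_div] at h

/-- Chernoff bound for the upper tail of a `Binomial(n, 1/2 - ε)` random variable
(written out via the explicit binomial probabilities), and the resulting bound on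
`∫₀¹ P(Sₙ > (n/2)(x+1)) dx`: it is at most `√(π/(2n))`, and (when `ε > 0`) at most
`e^{-n g(0)} / (n g'(0))`. -/
theorem binomial_tail_chernoff (n : ℕ) (hn : 1 ≤ n)
    (ε : ℝ) (hε0 : 0 ≤ ε) (hε : ε < 1 / 2) :
    let r : ℝ := 1 / 2 - ε
    let tail : ℝ → ℝ := fun x =>
      ∑ k ∈ Finset.range (n + 1),
        if (n : ℝ) / 2 * (x + 1) < k then
          (n.choose k : ℝ) * r ^ k * (1 - r) ^ (n - k) else 0
    let g : ℝ → ℝ := fun t =>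
      (1 + t) / 2 * Real.log ((1 + t) / (1 - 2 * ε))
        + (1 - t) / 2 * Real.log ((1 - t) / (1 + 2 * ε))
    (∀ x ∈ Icc (0 : ℝ) 1, tail x ≤ Real.exp (-(n : ℝ) * g x)) ∧
    (∫ x in (0 : ℝ)..1, tail x) ≤ Real.sqrt (π / (2 * n)) ∧
    (0 < ε →
      (∫ x in (0 : ℝ)..1, tail x) ≤
        Real.exp (-(n : ℝ) * (-(1 / 2) * Real.log (1 - 4 * ε ^ 2)))
          / ((n : ℝ) * ((1 / 2) * Real.log ((1 + 2 * ε) / (1 - 2 * ε))))) := by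
  intro r tail g
  have hn : (0 : ℝ) < n := by exact_mod_cast hn
  have hr : 0 < r := sub_pos.2 hε
  set g₀ := -(1 / 2) * log (1 - 4 * ε ^ 2)
  set c := 1 / 2 * log ((1 + 2 * ε) / (1 - 2 * ε))
  have hg₀ : 0 ≤ g₀ :=
    mul_nonneg_of_nonpos_of_nonpos (by norm_num) (log_nonpos (by nlinarith) (by nlinarith))
  have hc : 0 ≤ c :=
    mul_nonneg (by norm_num) <| log_nonneg <| by rw [le_div_iff₀ (by linarith)]; linarith
  have hbound : ∀ x ∈ Icc (0 : ℝ) 1, tail x ≤ exp (-n * g x) := fun x hx => by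
    have h := binomialTail_le_exp_neg_bernoulliKL (n := n) (q := (1 + x) / 2) (r := 1 / 2 - ε)
      hr (by linarith [hx.1]) (by linarith [hx.2])
    rwa [bernoulliKL_one_add_div_two,
      show (n : ℝ) * ((1 + x) / 2) = n / 2 * (x + 1) by ring] at h
  have hg : ∀ x ∈ Icc (0 : ℝ) 1, x ^ 2 / 2 + g₀ + c * x ≤ g x := fun x hx => by
    have h := sq_div_two_add_le_bernoulliKL (by linarith [hx.1]) hx.2 (by linarith) hε
    rwa [bernoulliKL_one_add_div_two] at h
  have htail : IntervalIntegrable tail volume 0 1 :=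
    ((binomialTail_antitone hr.le (by linarith [show r = 1 / 2 - ε from rfl])).comp_monotone
      ((monotone_id.add_const 1).const_mul (by positivity))).intervalIntegrable
  refine ⟨hbound, ?_, fun hε₀ => ?_⟩
  · calc ∫ x in 0..1, tail x ≤ sqrt (π / (n / 2)) / 2 :=
          intervalIntegral_le_sqrt_of_le_exp_neg_mul_sq (by positivity) htail fun x hx =>
            (hbound x hx).trans <| exp_le_exp.2 <| by nlinarith [hg x hx, mul_nonneg hc hx.1]
      _ = sqrt (π / (2 * n)) := by
          rw [show π / (n / 2) = 2 ^ 2 * (π / (2 * n)) by field_simp, sqrt_mul (by positivity),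
            sqrt_sq zero_le_two]
          ring
  · have hc : 0 < c :=
      mul_pos (by norm_num) <| log_pos <| by rw [lt_div_iff₀ (by linarith)]; linarith
    refine intervalIntegral_le_div_of_le_mul_exp_neg_mul (by positivity) (by positivity) htail
      fun x hx => (hbound x hx).trans ?_
    rw [← exp_add]
    exact exp_le_exp.2 <| by nlinarith [hg x hx]
end

section
/- Under the setting of the plug-in classifier h_θ̂ with posterior marginals φ_{θ,i|n}, for all γ ∈ (0, 1/2): R(θ, h_θ̂) ≤ (inf_h R(θ,h))/(1/2 − γ) + (1/n)∑_{i=1}^n P_θ(‖φ_{θ,i|n} − φ_{θ̂,i|n}‖_TV > γ). -/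
open MeasureTheory ProbabilityTheory Finset

/-!
Write `φ` for the true posterior of a label. The misclassification probability of an
`m'`-measurable classifier `g` is `E[1 - φ(g)]`. Pointwise, either the plug-in posterior is
more than `γ` away from `φ` in total variation, an event that is paid for by its probability,
or it is `γ`-close; then either `φ(g) ≤ 1/2 + γ`, so that `1 - φ(g) ≥ 1/2 - γ`, or
`φ(g) > 1/2 + γ`, and the plug-in classifier picks the same label as `g`.
-/

section TotalVariation

variable {𝕏 : Type*} [Fintype 𝕏] {p q : 𝕏 → ℝ} {a b : 𝕏} {γ : ℝ}

lemma eq_of_forall_le_of_tv_le_of_lt (hp : ∀ x, 0 ≤ p x) (hp1 : ∑ x, p x = 1)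
    (hq : ∀ x, q x ≤ q a) (htv : (1 / 2 : ℝ) * ∑ x, |p x - q x| ≤ γ) (hb : 1 / 2 + γ < p b) :
    a = b := by
  classical
  by_contra hab
  have pair_le_sum : ∀ f : 𝕏 → ℝ, (∀ x, 0 ≤ f x) → f a + f b ≤ ∑ x, f x := fun f hf => by
    rw [← sum_pair hab]
    exact sum_le_sum_of_subset_of_nonneg (subset_univ _) fun x _ _ => hf x
  have htv₂ := pair_le_sum (fun x => |p x - q x|) fun _ => abs_nonneg _
  have hp₂ := pair_le_sum p hp
  linarith [hq b, neg_abs_le (p a - q a), le_abs_self (p b - q b)]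

lemma one_sub_le_div_of_tv_le (hp : ∀ x, 0 ≤ p x) (hp1 : ∑ x, p x = 1)
    (hq : ∀ x, q x ≤ q a) (htv : (1 / 2 : ℝ) * ∑ x, |p x - q x| ≤ γ) (hγ : γ < 1 / 2) :
    1 - p a ≤ (1 - p b) / (1 / 2 - γ) := by
  have hc : 0 < 1 / 2 - γ := by linarith
  have hp_le_one : ∀ x, p x ≤ 1 := fun x =>
    hp1 ▸ single_le_sum (fun y _ => hp y) (mem_univ x)
  rcases le_or_gt (p b) (1 / 2 + γ) with hb | hb
  · rw [le_div_iff₀ hc]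
    nlinarith [hp a, hp_le_one a]
  · obtain rfl := eq_of_forall_le_of_tv_le_of_lt hp hp1 hq htv hb
    have hγ_nonneg : 0 ≤ γ := le_trans (by positivity) htv
    exact le_div_self (sub_nonneg.2 (hp_le_one a)) hc (by linarith)

end TotalVariation

section Partition

variable {Ω 𝕏 : Type*} [Fintype 𝕏]

lemma apply_eq_sum_indicator_preimage {E : Type*} [AddCommMonoid E] (f : 𝕏 → Ω → E)
    (g : Ω → 𝕏) (ω : Ω) : f (g ω) ω = ∑ x, (g ⁻¹' {x}).indicator (f x) ω := by
  rw [sum_eq_single (g ω) (fun x _ hx => Set.indicator_of_notMem (s := g ⁻¹' {x}) hx.symm _)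
    (fun h => (h (mem_univ _)).elim), Set.indicator_of_mem (s := g ⁻¹' {g ω}) rfl]

variable [MeasurableSpace 𝕏] [MeasurableSingletonClass 𝕏] [MeasurableSpace Ω] {μ : Measure Ω}
  {f : 𝕏 → Ω → ℝ} {g : Ω → 𝕏}

lemma integrable_apply_comp (hg : Measurable g) (hf : ∀ x, Integrable (f x) μ) :
    Integrable (fun ω => f (g ω) ω) μ := by
  simp only [apply_eq_sum_indicator_preimage f g]
  exact integrable_finsetSum _ fun x _ => (hf x).indicator (hg (measurableSet_singleton x))

lemma integral_apply_comp (hg : Measurable g) (hf : ∀ x, Integrable (f x) μ) :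
    ∫ ω, f (g ω) ω ∂μ = ∑ x, ∫ ω in g ⁻¹' {x}, f x ω ∂μ := by
  simp only [apply_eq_sum_indicator_preimage f g]
  rw [integral_finsetSum _ fun x _ => (hf x).indicator (hg (measurableSet_singleton x))]
  exact sum_congr rfl fun x _ => integral_indicator (hg (measurableSet_singleton x))

end Partition

section Posterior

variable {Ω 𝕏 : Type*} {m' mΩ : MeasurableSpace Ω} [Fintype 𝕏] [MeasurableSpace 𝕏]
  [MeasurableSingletonClass 𝕏] {μ : Measure Ω} {X g : Ω → 𝕏}

lemma ae_sum_condExp_preimage_singleton [IsFiniteMeasure μ] (hm' : m' ≤ mΩ)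
    (hX : Measurable X) : ∀ᵐ ω ∂μ, ∑ x, (μ⟦X ⁻¹' {x} | m'⟧) ω = 1 := by
  have hsum : ∑ x, (X ⁻¹' {x}).indicator (fun _ => (1 : ℝ)) = fun _ => 1 := by
    funext ω
    simpa only [Finset.sum_apply] using
      (apply_eq_sum_indicator_preimage (fun _ _ => (1 : ℝ)) X ω).symm
  have h := condExp_finsetSum (m := m') (μ := μ) (s := univ)
    fun x _ => (integrable_const (1 : ℝ)).indicator (hX (measurableSet_singleton x))
  rw [hsum, condExp_const hm'] at h
  filter_upwards [h] with ω hω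
  simpa only [Finset.sum_apply] using hω.symm

lemma integral_condExp_preimage_singleton_comp [IsFiniteMeasure μ] (hm' : m' ≤ mΩ)
    (hX : Measurable X) (hg : Measurable[m'] g) :
    ∫ ω, (μ⟦X ⁻¹' {g ω} | m'⟧) ω ∂μ = μ.real {ω | X ω = g ω} := by
  have hg' : Measurable g := hg.mono hm' le_rfl
  have hind : ∀ x, Integrable ((X ⁻¹' {x}).indicator fun _ => (1 : ℝ)) μ := fun x =>
    (integrable_const 1).indicator (hX (measurableSet_singleton x))
  calc ∫ ω, (μ⟦X ⁻¹' {g ω} | m'⟧) ω ∂μ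
      = ∑ x, ∫ ω in g ⁻¹' {x}, (μ⟦X ⁻¹' {x} | m'⟧) ω ∂μ :=
        integral_apply_comp (f := fun x => μ⟦X ⁻¹' {x} | m'⟧) hg' fun _ => integrable_condExp
    _ = ∑ x, ∫ ω in g ⁻¹' {x}, (X ⁻¹' {x}).indicator (fun _ => (1 : ℝ)) ω ∂μ :=
        sum_congr rfl fun x _ => setIntegral_condExp hm' (hind x) (hg (measurableSet_singleton x))
    _ = ∫ ω, (X ⁻¹' {g ω}).indicator (fun _ => (1 : ℝ)) ω ∂μ :=
        (integral_apply_comp hg' hind).symm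
    _ = μ.real {ω | X ω = g ω} := by
        rw [← integral_indicator_one (measurableSet_eq_fun hX hg')]
        rfl

lemma measureReal_ne_eq_integral_one_sub_condExp [IsProbabilityMeasure μ] (hm' : m' ≤ mΩ)
    (hX : Measurable X) (hg : Measurable[m'] g) :
    μ.real {ω | X ω ≠ g ω} = ∫ ω, (1 - (μ⟦X ⁻¹' {g ω} | m'⟧) ω) ∂μ := by
  have hg' : Measurable g := hg.mono hm' le_rfl
  have hφ : Integrable (fun ω => (μ⟦X ⁻¹' {g ω} | m'⟧) ω) μ :=
    integrable_apply_comp (f := fun x => μ⟦X ⁻¹' {x} | m'⟧) hg' fun _ => integrable_condExp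
  rw [integral_sub (integrable_const 1) hφ, integral_condExp_preimage_singleton_comp hm' hX hg,
    integral_const, probReal_univ, one_smul,
    ← probReal_compl_eq_one_sub (measurableSet_eq_fun hX hg')]
  rfl

end Posterior

lemma measureReal_ne_plugin_le {Ω 𝕏 : Type*} {m' mΩ : MeasurableSpace Ω} [Fintype 𝕏]
    [MeasurableSpace 𝕏] [MeasurableSingletonClass 𝕏] {μ : Measure Ω} [IsProbabilityMeasure μ]
    (hm' : m' ≤ mΩ) {X : Ω → 𝕏} (hX : Measurable X) {ψ : 𝕏 → Ω → ℝ}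
    (hψ : ∀ x, Measurable[m'] (ψ x)) {ĥ g : Ω → 𝕏} (hĥ : Measurable[m'] ĥ)
    (hĥ_max : ∀ᵐ ω ∂μ, ∀ x, ψ x ω ≤ ψ (ĥ ω) ω) (hg : Measurable[m'] g) {γ : ℝ}
    (hγ : γ < 1 / 2) :
    μ.real {ω | X ω ≠ ĥ ω} ≤ μ.real {ω | X ω ≠ g ω} / (1 / 2 - γ)
      + μ.real {ω | γ < (1 / 2 : ℝ) * ∑ x, |(μ⟦X ⁻¹' {x} | m'⟧) ω - ψ x ω|} := by
  set φ : 𝕏 → Ω → ℝ := fun x => μ⟦X ⁻¹' {x} | m'⟧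
  set A := {ω | γ < (1 / 2 : ℝ) * ∑ x, |φ x ω - ψ x ω|}
  have hc : 0 < 1 / 2 - γ := by linarith
  have hA : MeasurableSet A := by
    refine measurableSet_lt measurable_const (Measurable.const_mul ?_ _)
    exact Finset.measurable_sum _ fun x _ =>
      ((stronglyMeasurable_condExp.mono hm').measurable.sub ((hψ x).mono hm' le_rfl)).abs
  have hφ_nonneg : ∀ᵐ ω ∂μ, ∀ x, 0 ≤ φ x ω :=
    ae_all_iff.2 fun _ => condExp_nonneg (.of_forall (Set.indicator_nonneg fun _ _ => zero_le_one))
  have hpointwise : ∀ᵐ ω ∂μ,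
      1 - φ (ĥ ω) ω ≤ A.indicator (1 : Ω → ℝ) ω + (1 - φ (g ω) ω) / (1 / 2 - γ) := by
    filter_upwards [hφ_nonneg, ae_sum_condExp_preimage_singleton hm' hX, hĥ_max]
      with ω hφ0 hφ1 hmax
    by_cases hω : ω ∈ A
    · have hφ_le_one : φ (g ω) ω ≤ 1 := hφ1 ▸ single_le_sum (fun y _ => hφ0 y) (mem_univ _)
      rw [Set.indicator_of_mem hω, Pi.one_apply]
      linarith [hφ0 (ĥ ω), div_nonneg (sub_nonneg.2 hφ_le_one) hc.le]
    · rw [Set.indicator_of_notMem hω, zero_add]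
      exact one_sub_le_div_of_tv_le hφ0 hφ1 hmax (not_lt.1 hω) hγ
  have hint : ∀ {h : Ω → 𝕏}, Measurable[m'] h → Integrable (fun ω => 1 - φ (h ω) ω) μ :=
    fun hh => (integrable_const 1).sub
      (integrable_apply_comp (f := φ) (hh.mono hm' le_rfl) fun _ => integrable_condExp)
  have hIA : Integrable (A.indicator (1 : Ω → ℝ)) μ := (integrable_const 1).indicator hA
  rw [measureReal_ne_eq_integral_one_sub_condExp hm' hX hĥ,
    measureReal_ne_eq_integral_one_sub_condExp hm' hX hg, ← integral_indicator_one hA]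
  calc ∫ ω, 1 - φ (ĥ ω) ω ∂μ
      ≤ ∫ ω, A.indicator (1 : Ω → ℝ) ω + (1 - φ (g ω) ω) / (1 / 2 - γ) ∂μ :=
        integral_mono_ae (hint hĥ) (hIA.add ((hint hg).div_const (1 / 2 - γ))) hpointwise
    _ = (∫ ω, 1 - φ (g ω) ω ∂μ) / (1 / 2 - γ) + ∫ ω, A.indicator (1 : Ω → ℝ) ω ∂μ := by
        rw [integral_add hIA ((hint hg).div_const _), integral_div, add_comm]

lemma integral_mul_sum_ite_ne {Ω ι 𝕏 : Type*} [MeasurableSpace Ω] [Fintype ι] [DecidableEq 𝕏]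
    [MeasurableSpace 𝕏] [MeasurableEq 𝕏] {μ : Measure Ω} [IsFiniteMeasure μ] (c : ℝ)
    {X g : ι → Ω → 𝕏} (hX : ∀ i, Measurable (X i)) (hg : ∀ i, Measurable (g i)) :
    ∫ ω, c * ∑ i, (if X i ω ≠ g i ω then (1 : ℝ) else 0) ∂μ
      = c * ∑ i, μ.real {ω | X i ω ≠ g i ω} := by
  have hS : ∀ i, MeasurableSet {ω | X i ω ≠ g i ω} := fun i =>
    (measurableSet_eq_fun (hX i) (hg i)).compl
  have hind : ∀ i ω,
      (if X i ω ≠ g i ω then (1 : ℝ) else 0) = {ω | X i ω ≠ g i ω}.indicator 1 ω :=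
    fun i ω => by simp only [Set.indicator_apply, Set.mem_ofPred_eq, Pi.one_apply]
  simp only [hind]
  rw [integral_const_mul, integral_finsetSum _ fun i _ => (integrable_const 1).indicator (hS i)]
  simp only [integral_indicator_one (hS _)]

lemma le_ciInf_div_add {ι : Sort*} [Nonempty ι] {f : ι → ℝ} {a b c : ℝ} (hc : 0 < c)
    (h : ∀ i, a ≤ f i / c + b) : a ≤ (⨅ i, f i) / c + b := by
  rw [← sub_le_iff_le_add, le_div_iff₀ hc]
  exact le_ciInf fun i => by
    rw [← le_div_iff₀ hc, sub_le_iff_le_add]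
    exact h i

theorem plugin_risk_gamma_bound_general
    {Ω 𝕏 : Type*} {m' mΩ : MeasurableSpace Ω}
    [Fintype 𝕏] [DecidableEq 𝕏] [MeasurableSpace 𝕏] [DiscreteMeasurableSpace 𝕏]
    (hm' : m' ≤ mΩ) (μ : Measure Ω) [IsProbabilityMeasure μ]
    (n : ℕ)
    (X : Fin n → Ω → 𝕏) (hX : ∀ i, Measurable (X i))
    (ψ : Fin n → 𝕏 → Ω → ℝ)
    (hψmeas : ∀ i x, Measurable[m'] (ψ i x))
    (hhat : Fin n → Ω → 𝕏)
    (hhatmeas : ∀ i, Measurable[m'] (hhat i))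
    (hhatmax : ∀ i, ∀ᵐ ω ∂μ, ∀ x : 𝕏, ψ i x ω ≤ ψ i (hhat i ω) ω)
    (γ : ℝ) (hγ : γ < 1 / 2) :
    (∫ ω, (1 / n : ℝ) * ∑ i, (if X i ω ≠ hhat i ω then (1 : ℝ) else 0) ∂μ)
      ≤ (⨅ h : {h : Fin n → Ω → 𝕏 // ∀ i, Measurable[m'] (h i)},
            ∫ ω, (1 / n : ℝ) * ∑ i, (if X i ω ≠ h.1 i ω then (1 : ℝ) else 0) ∂μ)
          / (1 / 2 - γ)
        + (1 / n : ℝ) * ∑ i,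
            (μ {ω | γ < (1 / 2 : ℝ) *
              ∑ x, |(μ⟦X i ⁻¹' {x} | m'⟧) ω - ψ i x ω|}).toReal := by
  have : Nonempty {h : Fin n → Ω → 𝕏 // ∀ i, Measurable[m'] (h i)} := ⟨⟨hhat, hhatmeas⟩⟩
  refine le_ciInf_div_add (by linarith) fun h => ?_
  rw [integral_mul_sum_ite_ne _ hX fun i => (hhatmeas i).mono hm' le_rfl,
    integral_mul_sum_ite_ne _ hX fun i => (h.2 i).mono hm' le_rfl]
  simp only [← measureReal_def]
  calc (1 / n : ℝ) * ∑ i, μ.real {ω | X i ω ≠ hhat i ω}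
      ≤ (1 / n : ℝ) * ∑ i, (μ.real {ω | X i ω ≠ h.1 i ω} / (1 / 2 - γ)
          + μ.real {ω | γ < (1 / 2 : ℝ) * ∑ x, |(μ⟦X i ⁻¹' {x} | m'⟧) ω - ψ i x ω|}) := by
        gcongr with i
        exact measureReal_ne_plugin_le hm' (hX i) (hψmeas i) (hhatmeas i) (hhatmax i) (h.2 i) hγ
    _ = _ := by rw [sum_add_distrib, ← sum_div]; ring

/-- Risk bound for the plug-in classifier: for `γ ∈ (0, 1/2)`, the classification
risk of the classifier `ĥ` maximizing a plug-in posterior `ψ` satisfies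
`R(ĥ) ≤ (inf_h R(h))/(1/2 - γ) + (1/n) ∑ᵢ P(‖φᵢ - ψᵢ‖_TV > γ)`, where `φᵢ` is the
true posterior of `X i` given `m'` and the infimum is over `m'`-measurable
classifiers. -/
theorem plugin_risk_gamma_bound
    {Ω 𝕏 : Type*} {m' mΩ : MeasurableSpace Ω}
    [Fintype 𝕏] [DecidableEq 𝕏] [MeasurableSpace 𝕏] [DiscreteMeasurableSpace 𝕏]
    (hm' : m' ≤ mΩ) (μ : Measure Ω) [IsProbabilityMeasure μ]
    (n : ℕ) (hn : 1 ≤ n)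
    (X : Fin n → Ω → 𝕏) (hX : ∀ i, Measurable (X i))
    (ψ : Fin n → 𝕏 → Ω → ℝ)
    (hψmeas : ∀ i x, Measurable[m'] (ψ i x))
    (hψ0 : ∀ i x ω, 0 ≤ ψ i x ω) (hψ1 : ∀ i ω, ∑ x, ψ i x ω = 1)
    (hhat : Fin n → Ω → 𝕏)
    (hhatmeas : ∀ i, Measurable[m'] (hhat i))
    (hhatmax : ∀ i, ∀ᵐ ω ∂μ, ∀ x : 𝕏, ψ i x ω ≤ ψ i (hhat i ω) ω)
    (γ : ℝ) (hγ0 : 0 < γ) (hγ : γ < 1 / 2) :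
    (∫ ω, (1 / n : ℝ) * ∑ i, (if X i ω ≠ hhat i ω then (1 : ℝ) else 0) ∂μ)
      ≤ (⨅ h : {h : Fin n → Ω → 𝕏 // ∀ i, Measurable[m'] (h i)},
            ∫ ω, (1 / n : ℝ) * ∑ i, (if X i ω ≠ h.1 i ω then (1 : ℝ) else 0) ∂μ)
          / (1 / 2 - γ)
        + (1 / n : ℝ) * ∑ i,
            (μ {ω | γ < (1 / 2 : ℝ) *
              ∑ x, |(μ⟦X i ⁻¹' {x} | m'⟧) ω - ψ i x ω|}).toReal :=
  plugin_risk_gamma_bound_general hm' μ n X hX ψ hψmeas hhat hhatmeas hhatmax γ hγ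
end

section
/- Let Q be a J×J stochastic matrix with all entries bounded below by δ > 0 and above by 1 − (J−1)δ, and let φ be a probability vector on {1,…,J}. Define the backward kernel B(x̃, x) = φ(x)Q(x, x̃) / ∑_{x'} φ(x')Q(x', x̃). Then the Dobrushin coefficient of B satisfies δ(B) ≤ 1 − δ/(1 − (J−1)δ), where δ(B) = sup_{x̃, x̃'} ‖B(x̃, ·) − B(x̃', ·)‖_TV. -/
open Finset

/-- Dobrushin coefficient of the backward kernel: if `Q` is a `J × J` stochastic
matrix with entries in `[δ, 1 - (J-1)δ]` and `φ` is a probability vector, then the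
backward kernel `B(xt, x) = φ(x)Q(x, xt)/∑_{x'} φ(x')Q(x', xt)` satisfies
`sup_{xt, xt'} ‖B(xt,·) - B(xt',·)‖_TV ≤ 1 - δ/(1 - (J-1)δ)`, where the total
variation distance between probability vectors is half the ℓ¹ distance. -/
theorem backward_kernel_dobrushin (J : ℕ) (hJ : 1 ≤ J)
    (δ : ℝ) (hδ : 0 < δ)
    (Q : Fin J → Fin J → ℝ)
    (hQrow : ∀ x, ∑ x', Q x x' = 1)
    (hQlb : ∀ x x', δ ≤ Q x x')
    (hQub : ∀ x x', Q x x' ≤ 1 - (J - 1) * δ)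
    (φ : Fin J → ℝ) (hφ0 : ∀ x, 0 ≤ φ x) (hφ1 : ∑ x, φ x = 1)
    (B : Fin J → Fin J → ℝ)
    (hB : ∀ xt x, B xt x = φ x * Q x xt / ∑ x', φ x' * Q x' xt) :
    ∀ xt xt' : Fin J,
      (1 / 2 : ℝ) * ∑ x, |B xt x - B xt' x| ≤ 1 - δ / (1 - (J - 1) * δ) := by
  intro xt xt'
  have hx0 : Fin J := ⟨0, hJ⟩
  have hM : (0:ℝ) < 1 - (J - 1) * δ := lt_of_lt_of_le hδ (le_trans (hQlb hx0 hx0) (hQub hx0 hx0))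
  set M := 1 - (J - 1) * δ with hMdef
  -- denominator bounds
  have hDlb : ∀ t : Fin J, δ ≤ ∑ x', φ x' * Q x' t := by
    intro t
    calc δ = ∑ x', φ x' * δ := by rw [← Finset.sum_mul, hφ1, one_mul]
    _ ≤ ∑ x', φ x' * Q x' t :=
      Finset.sum_le_sum fun i _ => mul_le_mul_of_nonneg_left (hQlb i t) (hφ0 i)
  have hDub : ∀ t : Fin J, ∑ x', φ x' * Q x' t ≤ M := by
    intro t
    calc ∑ x', φ x' * Q x' t ≤ ∑ x', φ x' * M :=
      Finset.sum_le_sum fun i _ => mul_le_mul_of_nonneg_left (hQub i t) (hφ0 i)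
    _ = M := by rw [← Finset.sum_mul, hφ1, one_mul]
  have hDpos : ∀ t : Fin J, (0:ℝ) < ∑ x', φ x' * Q x' t := fun t => lt_of_lt_of_le hδ (hDlb t)
  -- each row of B sums to 1
  have hBsum : ∀ t : Fin J, ∑ x, B t x = 1 := by
    intro t
    have : ∑ x, B t x = ∑ x, φ x * Q x t / ∑ x', φ x' * Q x' t :=
      Finset.sum_congr rfl fun x _ => hB t x
    rw [this, ← Finset.sum_div, div_self (ne_of_gt (hDpos t))]
  -- pointwise lower bound B t x ≥ (δ/M) φ x
  have hBlb : ∀ t x, δ / M * φ x ≤ B t x := by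
    intro t x
    rw [hB, mul_comm, ← mul_div_assoc]
    exact div_le_div₀ (mul_nonneg (hφ0 x) (le_of_lt (lt_of_lt_of_le hδ (hQlb x t))))
      (mul_le_mul_of_nonneg_left (hQlb x t) (hφ0 x)) (hDpos t) (hDub t)
  -- |a - b| = a + b - 2 min a b
  have habs : ∀ a b : ℝ, |a - b| = a + b - 2 * min a b := by
    intro a b
    rcases le_total a b with h | h
    · rw [abs_of_nonpos (by linarith), min_eq_left h]; ring
    · rw [abs_of_nonneg (by linarith), min_eq_right h]; ring
  have hsum : ∑ x, |B xt x - B xt' x|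
      = 2 - 2 * ∑ x, min (B xt x) (B xt' x) := by
    have : ∑ x, |B xt x - B xt' x|
        = ∑ x, (B xt x + B xt' x - 2 * min (B xt x) (B xt' x)) :=
      Finset.sum_congr rfl fun x _ => habs _ _
    rw [this, Finset.sum_sub_distrib, Finset.sum_add_distrib, hBsum, hBsum,
      ← Finset.mul_sum]
    ring
  have hmin : δ / M ≤ ∑ x, min (B xt x) (B xt' x) := by
    calc δ / M = ∑ x, δ / M * φ x := by rw [← Finset.mul_sum, hφ1, mul_one]
    _ ≤ ∑ x, min (B xt x) (B xt' x) :=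
      Finset.sum_le_sum fun x _ => le_min (hBlb xt x) (hBlb xt' x)
  rw [hsum]
  linarith
end
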